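/- Let G be a simple graph that is a tree (i.e., G is connected and acyclic), possibly on an infinite vertex set, and let f be a graph automorphism of G satisfying f(f(v)) = v for every vertex v. Then either there exists a vertex v with f(v) = v, or there exist adjacent vertices u and v with f(u) = v and f(v) = u (i.e., f inverts an edge of G). -/
import Mathlib

lemma getVert_map_aux {V : Type*} {G : SimpleGraph V} (f : G →g G) {u v : V}
    (p : G.Walk u v) (i : ℕ) : (p.map f).getVert i = f (p.getVert i) := by
  induction p generalizing i with
  | nil => simp [SimpleGraph.Walk.getVert]
  | cons h p ih => cases i <;> simp [SimpleGraph.Walk.getVert, ih]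

/-- Every involutive automorphism of a tree (a connected acyclic simple graph,
possibly infinite) fixes a vertex or inverts an edge. -/
theorem involution_of_tree_fixes_vertex_or_inverts_edge
    {V : Type*} (G : SimpleGraph V) (hG : G.IsTree)
    (f : G ≃g G) (hf : ∀ v : V, f (f v) = v) :
    (∃ v : V, f v = v) ∨ (∃ u v : V, G.Adj u v ∧ f u = v ∧ f v = u) := by
  obtain ⟨v⟩ := hG.isConnected.nonempty
  obtain ⟨p, hp, hpu⟩ := hG.existsUnique_path v (f v)
  have hinj : Function.Injective (f : V → V) := f.injective
  -- image walk from f v to v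
  set q : G.Walk (f v) v := ((p.map f.toHom).copy rfl (hf v)) with hq
  have hq_path : q.IsPath := by
    simpa [hq] using (SimpleGraph.Walk.map_isPath_of_injective hinj hp)
  have hrev : q.reverse = p := by
    exact (hG.existsUnique_path v (f v)).unique (by simpa using hq_path.reverse) hp
  have hkey : ∀ i, f (p.getVert i) = p.getVert (p.length - i) := by
    intro i
    have h1 : q.getVert i = f (p.getVert i) := by
      simp [hq, getVert_map_aux]
    have h2 : q.reverse.getVert (q.length - i) = q.getVert i := by
      rw [SimpleGraph.Walk.getVert_reverse]
      rcases le_or_gt i q.length with h | h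
      · congr 1; omega
      · rw [SimpleGraph.Walk.getVert_of_length_le _ (by omega),
          SimpleGraph.Walk.getVert_of_length_le _ (by omega)]
    have hlen : q.length = p.length := by
      rw [← hrev, SimpleGraph.Walk.length_reverse]
    rw [← h1, ← h2, hrev, hlen]
  rcases Nat.even_or_odd p.length with ⟨m, hm⟩ | ⟨m, hm⟩
  · left
    refine ⟨p.getVert m, ?_⟩
    have := hkey m
    rwa [show p.length - m = m by omega] at this
  · right
    refine ⟨p.getVert m, p.getVert (m + 1), ?_, ?_, ?_⟩
    · exact p.adj_getVert_succ (by omega)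
    · have := hkey m
      rwa [show p.length - m = m + 1 by omega] at this
    · have := hkey (m + 1)
      rwa [show p.length - (m + 1) = m by omega] at this
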